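/- If the three qubit observables M₁, M₂, M₃ (self-adjoint operators on ℂ² with −1 ≤ M_i ≤ 1) are such that some pair {M_i, M_j} arises from a joint POVM (is compatible), then tr(X M₁ + Y M₂ + Z M₃) ≤ 2(√2 + 1), where X, Y, Z are the Pauli matrices. Moreover the bound is attained, e.g., by M₁ = M₂ = (X+Y)/√2 and M₃ = Z. -/

import Mathlib

open Matrix
open scoped ComplexOrder

noncomputable section

def σX : Matrix (Fin 2) (Fin 2) ℂ := !![0, 1; 1, 0]
def σY : Matrix (Fin 2) (Fin 2) ℂ := !![0, -Complex.I; Complex.I, 0]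
def σZ : Matrix (Fin 2) (Fin 2) ℂ := !![1, 0; 0, -1]

/-- Two dichotomic qubit observables are compatible if they arise as the two marginals
of a single joint 4-outcome POVM. -/
def PairCompatible (M N : Matrix (Fin 2) (Fin 2) ℂ) : Prop :=
  ∃ E : Fin 2 → Fin 2 → Matrix (Fin 2) (Fin 2) ℂ,
    (∀ a b, (E a b).PosSemidef) ∧ (∑ a, ∑ b, E a b) = 1 ∧
    M = E 0 0 + E 0 1 - E 1 0 - E 1 1 ∧
    N = E 0 0 - E 0 1 + E 1 0 - E 1 1


/-!
For a Hermitian involution `P`, the identity `1 - P = (1 - P)ᴴ (1 - P) / 2` shows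
`Re tr (P F) ≤ Re tr F` for every `F ≥ 0`; applied to `F = 1 ± M` it bounds each term
`tr (σ M)` by `tr 1 = 2`. If `M, N` have a joint POVM `E_ab` and `P, Q` anticommute, then
`P M + Q N = ∑ ((-1)^a P + (-1)^b Q) E_ab` where every `±P ± Q` squares to `2`, so the
compatible pair contributes at most `√2 tr ∑ E_ab = 2√2`. The witness `(X + Y)/√2` is itself
a Hermitian involution, compatible with itself through the POVM `{(1 + M)/2, 0, 0, (1 - M)/2}`.
-/

lemma Finset.sum_le_add_mul_of_pair {ι : Type*} [Fintype ι] [DecidableEq ι] {f : ι → ℝ}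
    {i j : ι} (hij : i ≠ j) {a b : ℝ} (hpair : f i + f j ≤ a) (hf : ∀ k, f k ≤ b) :
    ∑ k, f k ≤ a + (Fintype.card ι - 2 : ℕ) * b := by
  have hj : j ∈ univ.erase i := mem_erase.2 ⟨hij.symm, mem_univ j⟩
  rw [← add_sum_erase _ _ (mem_univ i), ← add_sum_erase _ _ hj, ← add_assoc]
  have hrest := sum_le_card_nsmul ((univ.erase i).erase j) f b (fun k _ => hf k)
  rw [card_erase_of_mem hj, card_erase_of_mem (mem_univ i), card_univ, Nat.sub_sub,
    nsmul_eq_mul] at hrest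
  linarith

section Involution

variable {n : Type*} [Fintype n]

lemma re_trace_conjTranspose_mul_self_mul_nonneg (K : Matrix n n ℂ) {F : Matrix n n ℂ}
    (hF : F.PosSemidef) : 0 ≤ (Kᴴ * K * F).trace.re := by
  rw [Matrix.mul_assoc, trace_mul_comm]
  exact (Complex.nonneg_iff.mp (hF.mul_mul_conjTranspose_same K).trace_nonneg).1

variable [DecidableEq n]

lemma one_sub_eq_smul_conjTranspose_mul_self {P : Matrix n n ℂ} (hP : P.IsHermitian)
    (hPP : P * P = 1) : 1 - P = (2⁻¹ : ℝ) • ((1 - P)ᴴ * (1 - P)) := by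
  simp only [conjTranspose_sub, conjTranspose_one, hP.eq, sub_mul, mul_sub, hPP,
    Matrix.one_mul, Matrix.mul_one]
  module

lemma posSemidef_one_sub_of_mul_self_eq_one {P : Matrix n n ℂ} (hP : P.IsHermitian)
    (hPP : P * P = 1) : (1 - P).PosSemidef := by
  rw [one_sub_eq_smul_conjTranspose_mul_self hP hPP]
  exact (posSemidef_conjTranspose_mul_self _).smul (by norm_num)

lemma re_trace_mul_le_of_mul_self_eq_one {P F : Matrix n n ℂ} (hP : P.IsHermitian)
    (hPP : P * P = 1) (hF : F.PosSemidef) : (P * F).trace.re ≤ F.trace.re := by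
  have hgap : ((1 - P) * F).trace.re = 2⁻¹ * ((1 - P)ᴴ * (1 - P) * F).trace.re := by
    conv_lhs => rw [one_sub_eq_smul_conjTranspose_mul_self hP hPP]
    rw [smul_mul_assoc, trace_smul, Complex.smul_re, smul_eq_mul]
  have := re_trace_conjTranspose_mul_self_mul_nonneg (1 - P) hF
  rw [sub_mul, Matrix.one_mul, trace_sub, Complex.sub_re] at hgap
  linarith

lemma re_trace_mul_le_of_mul_self_eq {H F : Matrix n n ℂ} {c : ℝ} (hc : 0 < c)
    (hH : H.IsHermitian) (hHH : H * H = c ^ 2 • 1) (hF : F.PosSemidef) :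
    (H * F).trace.re ≤ c * F.trace.re := by
  have hP : (c⁻¹ • H).IsHermitian := hH.smul (IsSelfAdjoint.all _)
  have hPP : c⁻¹ • H * c⁻¹ • H = 1 := by
    rw [smul_mul_smul, hHH, smul_smul]; field_simp; simp
  have := re_trace_mul_le_of_mul_self_eq_one hP hPP hF
  rw [smul_mul_assoc, trace_smul, Complex.smul_re, smul_eq_mul] at this
  rwa [inv_mul_le_iff₀ hc] at this

end Involution

section Anticommuting

variable {n : Type*} [Fintype n] [DecidableEq n] {P Q : Matrix n n ℂ}

lemma smul_add_smul_mul_self (hPP : P * P = 1) (hQQ : Q * Q = 1) (hPQ : P * Q + Q * P = 0)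
    (s t : ℝ) : (s • P + t • Q) * (s • P + t • Q) = (s ^ 2 + t ^ 2) • 1 := by
  simp only [add_mul, mul_add, smul_mul_smul, hPP, hQQ]
  linear_combination (norm := module) (s * t) • hPQ

lemma re_trace_mul_le_card (hP : P.IsHermitian) (hPP : P * P = 1) {M : Matrix n n ℂ}
    (hM₁ : (1 - M).PosSemidef) (hM₂ : (1 + M).PosSemidef) :
    (P * M).trace.re ≤ Fintype.card n := by
  have h₁ := re_trace_mul_le_of_mul_self_eq_one hP hPP hM₂
  have h₂ := re_trace_mul_le_of_mul_self_eq_one hP.neg (by rw [neg_mul_neg, hPP]) hM₁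
  simp only [mul_add, mul_sub, neg_mul, Matrix.mul_one, trace_add, trace_sub, trace_neg,
    trace_one, Complex.add_re, Complex.sub_re, Complex.neg_re, Complex.natCast_re] at h₁ h₂
  linarith

lemma re_trace_add_le_of_povm (hP : P.IsHermitian) (hQ : Q.IsHermitian) (hPP : P * P = 1)
    (hQQ : Q * Q = 1) (hPQ : P * Q + Q * P = 0) {E : Fin 2 → Fin 2 → Matrix n n ℂ}
    (hE : ∀ a b, (E a b).PosSemidef) (hsum : ∑ a, ∑ b, E a b = 1) :
    (P * (E 0 0 + E 0 1 - E 1 0 - E 1 1) + Q * (E 0 0 - E 0 1 + E 1 0 - E 1 1)).trace.re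
      ≤ √2 * Fintype.card n := by
  set sgn : Fin 2 → ℝ := ![1, -1]
  set H : Fin 2 → Fin 2 → Matrix n n ℂ := fun a b => sgn a • P + sgn b • Q
  have hsgn : ∀ a, sgn a ^ 2 = 1 := by intro a; fin_cases a <;> simp [sgn]
  have hH : ∀ a b, (H a b).IsHermitian := fun a b =>
    (hP.smul (IsSelfAdjoint.all _)).add (hQ.smul (IsSelfAdjoint.all _))
  have hHH : ∀ a b, H a b * H a b = √2 ^ 2 • 1 := by
    intro a b
    rw [smul_add_smul_mul_self hPP hQQ hPQ, hsgn, hsgn, Real.sq_sqrt zero_le_two]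
    norm_num
  have hexp : P * (E 0 0 + E 0 1 - E 1 0 - E 1 1) + Q * (E 0 0 - E 0 1 + E 1 0 - E 1 1)
      = ∑ a, ∑ b, H a b * E a b := by
    simp only [H, sgn, Fin.sum_univ_two, cons_val_zero, cons_val_one, cons_val_fin_one, add_mul,
      mul_add, mul_sub, smul_mul_assoc, one_smul, neg_smul]
    abel
  calc _ = ∑ a, ∑ b, (H a b * E a b).trace.re := by simp only [hexp, trace_sum, Complex.re_sum]
    _ ≤ ∑ a, ∑ b, √2 * (E a b).trace.re := by
      gcongr with a _ b _
      exact re_trace_mul_le_of_mul_self_eq (by positivity) (hH a b) (hHH a b) (hE a b)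
    _ = √2 * Fintype.card n := by
      simp only [← Finset.mul_sum, ← Complex.re_sum, ← trace_sum, hsum, trace_one,
        Complex.natCast_re]

end Anticommuting

section Qubit

variable {P Q M N : Matrix (Fin 2) (Fin 2) ℂ}

lemma PairCompatible.re_trace_add_le (h : PairCompatible M N) (hP : P.IsHermitian)
    (hQ : Q.IsHermitian) (hPP : P * P = 1) (hQQ : Q * Q = 1) (hPQ : P * Q + Q * P = 0) :
    (P * M).trace.re + (Q * N).trace.re ≤ 2 * √2 := by
  obtain ⟨E, hE, hsum, rfl, rfl⟩ := h
  have := re_trace_add_le_of_povm hP hQ hPP hQQ hPQ hE hsum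
  rwa [trace_add, Complex.add_re, Fintype.card_fin, Nat.cast_ofNat, mul_comm] at this

lemma pairCompatible_self (hM₁ : (1 - M).PosSemidef) (hM₂ : (1 + M).PosSemidef) :
    PairCompatible M M := by
  refine ⟨![![(2⁻¹ : ℝ) • (1 + M), 0], ![0, (2⁻¹ : ℝ) • (1 - M)]], ?_, ?_, ?_, ?_⟩
  · intro a b
    fin_cases a <;> fin_cases b
    exacts [hM₂.smul (by norm_num), .zero, .zero, hM₁.smul (by norm_num)]
  all_goals
    simp only [Fin.sum_univ_two, cons_val', cons_val_zero, cons_val_one, cons_val_fin_one,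
      smul_add, add_zero, zero_add, sub_zero]
    module

lemma pairCompatible_self_of_mul_self_eq_one (hM : M.IsHermitian) (hMM : M * M = 1) :
    PairCompatible M M :=
  pairCompatible_self (posSemidef_one_sub_of_mul_self_eq_one hM hMM)
    (by simpa using posSemidef_one_sub_of_mul_self_eq_one hM.neg (by rw [neg_mul_neg, hMM]))

def pauli : Fin 3 → Matrix (Fin 2) (Fin 2) ℂ := ![σX, σY, σZ]

lemma pauli_isHermitian (i : Fin 3) : (pauli i).IsHermitian := by
  fin_cases i <;> ext a b <;> fin_cases a <;> fin_cases b <;> simp [pauli, σX, σY, σZ]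

lemma pauli_mul_self (i : Fin 3) : pauli i * pauli i = 1 := by
  fin_cases i <;> ext a b <;> fin_cases a <;> fin_cases b <;> simp [pauli, σX, σY, σZ]

lemma pauli_anticomm {i j : Fin 3} (hij : i ≠ j) : pauli i * pauli j + pauli j * pauli i = 0 := by
  fin_cases i <;> fin_cases j <;> simp at hij <;>
    ext a b <;> fin_cases a <;> fin_cases b <;> simp [pauli, σX, σY, σZ]

end Qubit

lemma re_trace_pauli_le_of_pairCompatible (M : Fin 3 → Matrix (Fin 2) (Fin 2) ℂ)
    (hM₁ : ∀ i, (1 - M i).PosSemidef) (hM₂ : ∀ i, (1 + M i).PosSemidef)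
    (hcompat : ∃ i j : Fin 3, i ≠ j ∧ PairCompatible (M i) (M j)) :
    (σX * M 0 + σY * M 1 + σZ * M 2).trace.re ≤ 2 * (√2 + 1) := by
  obtain ⟨i, j, hij, hc⟩ := hcompat
  set f : Fin 3 → ℝ := fun k => (pauli k * M k).trace.re
  have hsum : (σX * M 0 + σY * M 1 + σZ * M 2).trace.re = ∑ k, f k := by
    simp [f, pauli, Fin.sum_univ_three, trace_add]
  have hf : ∀ k, f k ≤ 2 := fun k =>
    (re_trace_mul_le_card (pauli_isHermitian k) (pauli_mul_self k) (hM₁ k) (hM₂ k)).trans_eq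
      (by simp)
  have hfij : f i + f j ≤ 2 * √2 := hc.re_trace_add_le (pauli_isHermitian i)
    (pauli_isHermitian j) (pauli_mul_self i) (pauli_mul_self j) (pauli_anticomm hij)
  rw [hsum]
  refine (Finset.sum_le_add_mul_of_pair hij hfij hf).trans_eq ?_
  norm_num
  ring

/-- If some pair among three qubit observables M₁, M₂, M₃ is compatible, then
`tr(X M₁ + Y M₂ + Z M₃) ≤ 2(√2 + 1)`; moreover the bound is attained by
`M₁ = M₂ = (X+Y)/√2`, `M₃ = Z`. -/
theorem genuine_triplewise_incompatibility_witness :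
    (∀ M : Fin 3 → Matrix (Fin 2) (Fin 2) ℂ,
      (∀ i, (M i).IsHermitian) →
      (∀ i, (1 - M i).PosSemidef) → (∀ i, (1 + M i).PosSemidef) →
      (∃ i j : Fin 3, i ≠ j ∧ PairCompatible (M i) (M j)) →
      ((σX * M 0 + σY * M 1 + σZ * M 2).trace).re ≤ 2 * (Real.sqrt 2 + 1))
    ∧
    ((σX * (((Real.sqrt 2)⁻¹ : ℝ) • (σX + σY))
      + σY * (((Real.sqrt 2)⁻¹ : ℝ) • (σX + σY))
      + σZ * σZ).trace).re = 2 * (Real.sqrt 2 + 1)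
    ∧ PairCompatible (((Real.sqrt 2)⁻¹ : ℝ) • (σX + σY))
        (((Real.sqrt 2)⁻¹ : ℝ) • (σX + σY)) := by
  have hW : ((√2)⁻¹ • (σX + σY)).IsHermitian :=
    ((pauli_isHermitian 0).add (pauli_isHermitian 1)).smul (IsSelfAdjoint.all _)
  have hWW : (√2)⁻¹ • (σX + σY) * (√2)⁻¹ • (σX + σY) = 1 := by
    rw [smul_add]
    refine (smul_add_smul_mul_self (pauli_mul_self 0) (pauli_mul_self 1)
      (pauli_anticomm (by decide)) _ _).trans ?_
    rw [inv_pow, Real.sq_sqrt zero_le_two]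
    norm_num
  refine ⟨fun M _ hM₁ hM₂ hcompat => re_trace_pauli_le_of_pairCompatible M hM₁ hM₂ hcompat,
    ?_, pairCompatible_self_of_mul_self_eq_one hW hWW⟩
  simp [σX, σY, σZ, trace_fin_two]
  ring

end
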